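/- Let φ_1,…,φ_k : B(H) → B(H) be pairwise commuting, power-bounded, positive linear maps, let Y ∈ B(H) be self-adjoint, and let p = (p_1,…,p_k) ∈ ℤ_+^k with p_i ≥ 1 for every i. Then the following are equivalent: (i) (id−φ_1)^{ε_1 p_1} ∘ ⋯ ∘ (id−φ_k)^{ε_k p_k}(Y) ≥ 0 for every ε = (ε_1,…,ε_k) ∈ {0,1}^k with ε ≠ 0; (ii) (id−φ_1)^{q_1} ∘ ⋯ ∘ (id−φ_k)^{q_k}(Y) ≥ 0 for every q = (q_1,…,q_k) ∈ ℤ_+^k with q ≤ p and q ≠ 0. -/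

import Mathlib

/-!
A positive map `ψ` preserves self-adjointness, so everything in sight is self-adjoint. The heart
of the argument is a one-variable descent: if `w` is self-adjoint, `z = (1 - ψ) w` and
`(1 - ψ) z ≥ 0`, then telescoping gives `ψ^j z ≤ z`, hence `w - ψ^n w = ∑_{j<n} ψ^j z ≤ n z`.
Power boundedness bounds `‖w - ψ^n w‖` uniformly in `n`, so `z ≥ -C/n` for all `n`, and `z ≥ 0`
because the positive cone is closed. Iterating, `(1 - ψ)^b x ≥ 0` implies `(1 - ψ)^a x ≥ 0` for
`1 ≤ a ≤ b`. Since the `φ_i` commute, each factor `(1 - φ_i)^{q_i}` can be pulled to the front, so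
one may lower the exponents one coordinate at a time from `(ε_i p_i)_i` down to `q`, where
`ε_i = [q_i ≠ 0]`.
-/

open Filter Topology ContinuousLinearMap Finset Function

section Iterates

variable {𝕜 E : Type*} [NontriviallyNormedField 𝕜] [NormedAddCommGroup E] [NormedSpace 𝕜 E]

lemma sum_range_pow_apply_one_sub (ψ : E →L[𝕜] E) (a : E) (n : ℕ) :
    ∑ i ∈ range n, (ψ ^ i) ((1 - ψ) a) = a - (ψ ^ n) a := by
  simpa [pow_succ, mul_apply_eq_comp] using sum_range_sub' (fun i => (ψ ^ i) a) n

variable [PartialOrder E] {ψ : E →L[𝕜] E}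

lemma pow_apply_nonneg (hψ : ∀ a, 0 ≤ a → 0 ≤ ψ a) (n : ℕ) {a : E} (ha : 0 ≤ a) :
    0 ≤ (ψ ^ n) a := by
  induction n with
  | zero => simpa using ha
  | succ n ih => rw [pow_succ', mul_apply_eq_comp]; exact hψ _ ih

lemma pow_apply_le_self [IsOrderedAddMonoid E] (hψ : ∀ a, 0 ≤ a → 0 ≤ ψ a) {z : E}
    (hz : 0 ≤ (1 - ψ) z) (n : ℕ) : (ψ ^ n) z ≤ z := by
  rw [← sub_nonneg, ← sum_range_pow_apply_one_sub]
  exact sum_nonneg fun i _ => pow_apply_nonneg hψ i hz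

end Iterates

section SelfAdjointPreserving

variable (𝕜 A : Type*) [NontriviallyNormedField 𝕜] [NormedAddCommGroup A] [NormedSpace 𝕜 A]
  [Star A]

def selfAdjointPreservingMaps : Submonoid (A →L[𝕜] A) where
  carrier := {T | ∀ a, IsSelfAdjoint a → IsSelfAdjoint (T a)}
  one_mem' _ ha := ha
  mul_mem' hS hT a ha := hS _ (hT a ha)

end SelfAdjointPreserving

section PositiveMap

variable {A : Type*} [CStarAlgebra A] [PartialOrder A] [StarOrderedRing A]
  {ψ : A →L[ℂ] A}

lemma mem_selfAdjointPreservingMaps_of_map_nonneg (hψ : ∀ a, 0 ≤ a → 0 ≤ ψ a) :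
    ψ ∈ selfAdjointPreservingMaps ℂ A := fun a ha => by
  rw [← CFC.posPart_sub_negPart a ha, map_sub]
  exact (IsSelfAdjoint.of_nonneg (hψ _ (CFC.posPart_nonneg a))).sub
    (IsSelfAdjoint.of_nonneg (hψ _ (CFC.negPart_nonneg a)))

lemma one_sub_mem_selfAdjointPreservingMaps_of_map_nonneg (hψ : ∀ a, 0 ≤ a → 0 ≤ ψ a) :
    1 - ψ ∈ selfAdjointPreservingMaps ℂ A := fun a ha => by
  simpa using ha.sub (mem_selfAdjointPreservingMaps_of_map_nonneg hψ a ha)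

lemma one_sub_apply_nonneg_of_powerBounded (hψ : ∀ a, 0 ≤ a → 0 ≤ ψ a) {M : ℝ}
    (hM : ∀ n : ℕ, ‖ψ ^ n‖ ≤ M) {w : A} (hw : IsSelfAdjoint w)
    (h : 0 ≤ (1 - ψ) ((1 - ψ) w)) : 0 ≤ (1 - ψ) w := by
  set z := (1 - ψ) w
  set C := (1 + M) * ‖w‖
  have bound : ∀ n : ℕ, -algebraMap ℝ A C ≤ n • z := fun n => calc
    -algebraMap ℝ A C ≤ -algebraMap ℝ A ‖w - (ψ ^ n) w‖ := by
      rw [neg_le_neg_iff, ← sub_nonneg, ← map_sub, Algebra.algebraMap_eq_smul_one]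
      refine smul_nonneg (sub_nonneg.2 ?_) zero_le_one
      calc ‖w - (ψ ^ n) w‖ ≤ ‖w‖ + ‖ψ ^ n‖ * ‖w‖ := norm_sub_le_of_le le_rfl (le_opNorm _ _)
        _ ≤ C := by nlinarith [hM n, norm_nonneg w]
    _ ≤ w - (ψ ^ n) w :=
      IsSelfAdjoint.neg_algebraMap_norm_le_self
        (hw.sub (pow_mem (mem_selfAdjointPreservingMaps_of_map_nonneg hψ) n w hw))
    _ = ∑ i ∈ range n, (ψ ^ i) z := (sum_range_pow_apply_one_sub ψ w n).symm
    _ ≤ n • z := by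
      simpa using sum_le_card_nsmul (range n) _ z fun i _ => pow_apply_le_self hψ h i
  have approx : Tendsto (fun n : ℕ => z + algebraMap ℝ A (C / n)) atTop (𝓝 z) := by
    simpa using tendsto_const_nhds.add
      (((continuous_algebraMap ℝ A).tendsto 0).comp (tendsto_const_div_atTop_nhds_zero_nat C))
  refine ge_of_tendsto approx (eventually_atTop.2 ⟨1, fun n hn => ?_⟩)
  have hn : (0 : ℝ) < n := by exact_mod_cast hn
  have : z + algebraMap ℝ A (C / n) = (n : ℝ)⁻¹ • (n • z + algebraMap ℝ A C) := by
    rw [smul_add, ← Nat.cast_smul_eq_nsmul ℝ, inv_smul_smul₀ hn.ne', div_eq_inv_mul,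
      map_mul, Algebra.algebraMap_eq_smul_one (n : ℝ)⁻¹, smul_mul_assoc, one_mul]
  rw [this]
  exact smul_nonneg (inv_nonneg.2 hn.le) (neg_le_iff_add_nonneg.1 (bound n))

lemma one_sub_pow_apply_nonneg_of_le (hψ : ∀ a, 0 ≤ a → 0 ≤ ψ a) {M : ℝ}
    (hM : ∀ n : ℕ, ‖ψ ^ n‖ ≤ M) {x : A} (hx : IsSelfAdjoint x) {a b : ℕ} (ha : 1 ≤ a)
    (hab : a ≤ b) (h : 0 ≤ ((1 - ψ) ^ b) x) : 0 ≤ ((1 - ψ) ^ a) x := by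
  induction b, hab using Nat.le_induction with
  | base => exact h
  | succ b hab ih =>
    obtain ⟨m, rfl⟩ := Nat.exists_eq_add_of_le' (ha.trans hab)
    refine ih ?_
    have hw := pow_mem (one_sub_mem_selfAdjointPreservingMaps_of_map_nonneg hψ) m x hx
    rw [pow_succ', mul_apply_eq_comp]
    rw [pow_succ', pow_succ', mul_apply_eq_comp, mul_apply_eq_comp] at h
    exact one_sub_apply_nonneg_of_powerBounded hψ hM hw h

end PositiveMap

section MultiPow

variable {M : Type*} [Monoid M] {k : ℕ}

def multiPow (T : Fin k → M) (e : Fin k → ℕ) : M := (List.ofFn fun i => T i ^ e i).prod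

lemma multiPow_update {T : Fin k → M} (hT : ∀ i j, Commute (T i) (T j)) (e : Fin k → ℕ)
    (i : Fin k) (a : ℕ) : multiPow T (update e i a) = T i ^ a * multiPow T (update e i 0) := by
  have hc : ∀ f : Fin k → ℕ, ((univ : Finset (Fin k)) : Set (Fin k)).Pairwise
      (Commute on fun j => T j ^ f j) := fun f j _ l _ _ => (hT j l).pow_pow _ _
  have hprod : ∀ f : Fin k → ℕ, multiPow T f = univ.noncommProd (fun j => T j ^ f j) (hc f) :=
    fun f => by simp only [multiPow, noncommProd, Fin.univ_val_map, Multiset.noncommProd_coe]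
  rw [hprod, hprod, ← mul_noncommProd_erase _ (mem_univ i),
    ← mul_noncommProd_erase _ (mem_univ i)]
  simp only [update_self, pow_zero, one_mul]
  congr 1
  exact noncommProd_congr rfl (fun j hj => by rw [update_of_ne (ne_of_mem_erase hj),
    update_of_ne (ne_of_mem_erase hj)]) _

end MultiPow

lemma Pi.decreasing_induction_update {ι : Type*} [Fintype ι] [DecidableEq ι] {P : (ι → ℕ) → Prop}
    (hP : ∀ e i a, 1 ≤ a → a ≤ e i → P e → P (update e i a)) {e q : ι → ℕ} (he : P e)
    (hqe : q ≤ e) (hsupp : ∀ i, q i = 0 → e i = 0) : P q := by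
  suffices ∀ s : Finset ι, P (s.piecewise q e) by simpa using this univ
  intro s
  induction s using Finset.induction_on with
  | empty => simpa using he
  | insert i s hi ih =>
    rw [piecewise_insert]
    by_cases hq : q i = 0
    · rwa [update_eq_self_iff.2 (by rw [piecewise_eq_of_notMem _ _ _ hi, hq, hsupp i hq])]
    · exact hP _ i _ (Nat.one_le_iff_ne_zero.2 hq)
        (by rw [piecewise_eq_of_notMem _ _ _ hi]; exact hqe i) ih

/-- **Proposition 1.1 (Popescu).**  Let `φ_1, …, φ_k : B(H) → B(H)` be pairwise commuting,
power-bounded, positive linear maps, let `Y ∈ B(H)` be self-adjoint and let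
`p = (p_1, …, p_k) ∈ ℤ₊^k` with `p_i ≥ 1` for every `i`.  Then
`(id−φ_1)^{ε_1 p_1} ∘ ⋯ ∘ (id−φ_k)^{ε_k p_k}(Y) ≥ 0` for every `ε ∈ {0,1}^k`, `ε ≠ 0`,
if and only if `(id−φ_1)^{q_1} ∘ ⋯ ∘ (id−φ_k)^{q_k}(Y) ≥ 0` for every `q ∈ ℤ₊^k` with
`q ≤ p`, `q ≠ 0`. -/
theorem stmt_0 {H : Type*} [NormedAddCommGroup H] [InnerProductSpace ℂ H] [CompleteSpace H]
    {k : ℕ} (φ : Fin k → ((H →L[ℂ] H) →L[ℂ] (H →L[ℂ] H)))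
    (hpos : ∀ i (A : H →L[ℂ] H), A.IsPositive → ((φ i) A).IsPositive)
    (hpb : ∀ i, ∃ M > (0 : ℝ), ∀ N : ℕ, ‖(φ i) ^ N‖ ≤ M)
    (hcomm : ∀ i j, Commute (φ i) (φ j))
    (Y : H →L[ℂ] H) (hY : IsSelfAdjoint Y)
    (p : Fin k → ℕ) (hp : ∀ i, 1 ≤ p i) :
    (∀ ε : Fin k → Bool, ε ≠ (fun _ => false) →
        (((List.ofFn fun i =>
            ((1 : (H →L[ℂ] H) →L[ℂ] (H →L[ℂ] H)) - φ i) ^ (if ε i then p i else 0)).prod)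
          Y).IsPositive)
      ↔ (∀ q : Fin k → ℕ, (∀ i, q i ≤ p i) → q ≠ 0 →
        (((List.ofFn fun i =>
            ((1 : (H →L[ℂ] H) →L[ℂ] (H →L[ℂ] H)) - φ i) ^ (q i)).prod)
          Y).IsPositive) := by
  classical
  set T : Fin k → ((H →L[ℂ] H) →L[ℂ] (H →L[ℂ] H)) := fun i => 1 - φ i
  have hφ : ∀ i a, 0 ≤ a → 0 ≤ φ i a := by simpa only [nonneg_iff_isPositive] using hpos
  have hT : ∀ i j, Commute (T i) (T j) := fun i j =>
    (Commute.one_left _).sub_left ((Commute.one_right _).sub_right (hcomm i j))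
  have descent : ∀ e i a, 1 ≤ a → a ≤ e i → 0 ≤ multiPow T e Y →
      0 ≤ multiPow T (update e i a) Y := by
    intro e i a ha hae he
    obtain ⟨M, -, hM⟩ := hpb i
    have hsa : IsSelfAdjoint (multiPow T (update e i 0) Y) :=
      Submonoid.list_prod_mem (selfAdjointPreservingMaps ℂ _) (fun _ hS => by
        obtain ⟨j, rfl⟩ := List.mem_ofFn.1 hS
        exact pow_mem (one_sub_mem_selfAdjointPreservingMaps_of_map_nonneg (hφ j)) _) Y hY
    rw [← update_eq_self i e, multiPow_update hT, mul_apply_eq_comp] at he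
    rw [multiPow_update hT, mul_apply_eq_comp]
    exact one_sub_pow_apply_nonneg_of_le (hφ i) hM hsa ha hae he
  simp_rw [← nonneg_iff_isPositive]
  constructor
  · intro h q hqp hq0
    refine Pi.decreasing_induction_update (P := fun e => 0 ≤ multiPow T e Y) descent
      (h (fun i => decide (q i ≠ 0)) ?_) (fun i => ?_) (fun i hi => by simp [hi])
    · simpa [funext_iff] using hq0
    · by_cases hi : q i = 0 <;> simp [hi, hqp i]
  · intro h ε hε
    obtain ⟨j, hj⟩ := Function.ne_iff.1 hε
    refine h _ (fun i => by split_ifs <;> simp) (Function.ne_iff.2 ⟨j, ?_⟩)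
    simpa [hj] using Nat.one_le_iff_ne_zero.1 (hp j)
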